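/- Let f(θ) = −r cos(2θt − φ) + b with r ≥ 0, t > 0, and θ̄ ∈ ℝ with θ̄ ≠ φ/(2t). Define w = f'(θ̄)/(θ̄ − φ/(2t)) where f'(θ) = 2rt sin(2θt − φ). Then the quadratic q(θ) = f(θ̄) + f'(θ̄)(θ − θ̄) + (w/2)(θ − θ̄)² satisfies q(θ) ≥ f(θ) for all θ in the interval [(φ−π)/(2t), (φ+π)/(2t)], with equality at θ = θ̄. -/
import Mathlib


open Real

/-- sinc is antitone on [0, π]: for `0 ≤ a ≤ b ≤ π`, `a * sin b ≤ b * sin a`. -/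
lemma sinc_aux {a b : ℝ} (ha : 0 ≤ a) (hab : a ≤ b) (hb : b ≤ π) :
    a * Real.sin b ≤ b * Real.sin a := by
  rcases eq_or_lt_of_le (ha.trans hab) with hb0 | hb0
  · simp [← hb0]
  have hmem1 : b ∈ Set.Icc (0:ℝ) π := ⟨(ha.trans hab), hb⟩
  have hmem0 : (0:ℝ) ∈ Set.Icc (0:ℝ) π := ⟨le_rfl, Real.pi_pos.le⟩
  have h1 : 0 ≤ a / b := div_nonneg ha hb0.le
  have h2 : 0 ≤ 1 - a / b := by
    have : a / b ≤ 1 := div_le_one_of_le₀ hab hb0.le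
    linarith
  have := strictConcaveOn_sin_Icc.concaveOn.2 hmem1 hmem0 h1 h2 (by ring)
  simp only [smul_eq_mul, mul_zero, add_zero, Real.sin_zero] at this
  have hab' : a / b * b = a := div_mul_cancel₀ a hb0.ne'
  rw [hab'] at this
  have : a / b * Real.sin b ≤ Real.sin a := by linarith
  calc a * Real.sin b = b * (a / b * Real.sin b) := by field_simp
    _ ≤ b * Real.sin a := by nlinarith

/-- Core inequality: the function `cos x + (sin y/(2y)) x²` on `[-π, π]` is minimized at `x = y`
(for `0 < y ≤ π`). -/
lemma core_aux (y : ℝ) (hy0 : 0 < y) (hyπ : y ≤ π) :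
    ∀ x, -π ≤ x → x ≤ π →
      Real.cos y + Real.sin y / (2 * y) * y ^ 2 ≤ Real.cos x + Real.sin y / (2 * y) * x ^ 2 := by
  set c : ℝ := Real.sin y / (2 * y) with hc
  set F : ℝ → ℝ := fun x => Real.cos x + c * x ^ 2 with hF
  have hder : ∀ x : ℝ, HasDerivAt F (-Real.sin x + c * (2 * x)) x := by
    intro x
    have h1 : HasDerivAt Real.cos (-Real.sin x) x := Real.hasDerivAt_cos x
    have h2 : HasDerivAt (fun x : ℝ => x ^ 2) (2 * x) x := by
      simpa using hasDerivAt_pow 2 x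
    exact h1.add (h2.const_mul c)
  have hderiv : ∀ x : ℝ, deriv F x = -Real.sin x + c * (2 * x) := fun x => (hder x).deriv
  have hcont : Continuous F := by
    apply Real.continuous_cos.add (continuous_const.mul (continuous_pow 2))
  have hdiff : ∀ s : Set ℝ, DifferentiableOn ℝ F s := fun s =>
    fun x _ => ((hder x).differentiableAt).differentiableWithinAt
  -- antitone on [0, y]
  have hant : AntitoneOn F (Set.Icc 0 y) := by
    apply antitoneOn_of_deriv_nonpos (convex_Icc 0 y) hcont.continuousOn (hdiff _)
    intro x hx
    rw [interior_Icc] at hx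
    rw [hderiv]
    have hs := sinc_aux hx.1.le hx.2.le hyπ
    have h1 : c * (2 * x) = Real.sin y * x / y := by rw [hc]; field_simp
    rw [h1]
    have h2 : Real.sin y * x / y ≤ Real.sin x := by rw [div_le_iff₀ hy0]; nlinarith
    linarith
  -- monotone on [y, π]
  have hmono : MonotoneOn F (Set.Icc y π) := by
    apply monotoneOn_of_deriv_nonneg (convex_Icc y π) hcont.continuousOn (hdiff _)
    intro x hx
    rw [interior_Icc] at hx
    rw [hderiv]
    have hs := sinc_aux hy0.le hx.1.le hx.2.le
    have h1 : c * (2 * x) = Real.sin y * x / y := by rw [hc]; field_simp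
    rw [h1]
    have h2 : Real.sin x ≤ Real.sin y * x / y := by rw [le_div_iff₀ hy0]; nlinarith
    linarith
  have key : ∀ x, 0 ≤ x → x ≤ π → F y ≤ F x := by
    intro x hx0 hxπ
    rcases le_total x y with h | h
    · exact hant ⟨hx0, h⟩ ⟨hy0.le, le_rfl⟩ h
    · exact hmono ⟨le_rfl, hyπ⟩ ⟨h, hxπ⟩ h
  intro x hx1 hx2
  rcases le_total 0 x with h | h
  · exact key x h hx2
  · have := key (-x) (by linarith) (by linarith)
    simpa [F, Real.cos_neg, neg_sq] using this

theorem stmt_6 (r t φ b θbar : ℝ) (hr : 0 ≤ r) (ht : 0 < t)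
    (hne : θbar ≠ φ / (2 * t))
    (hmem : θbar ∈ Set.Icc ((φ - π) / (2 * t)) ((φ + π) / (2 * t)))
    (f : ℝ → ℝ) (hf : ∀ θ, f θ = -r * Real.cos (2 * θ * t - φ) + b)
    (f' : ℝ → ℝ) (hf' : ∀ θ, f' θ = 2 * r * t * Real.sin (2 * θ * t - φ))
    (w : ℝ) (hw : w = f' θbar / (θbar - φ / (2 * t)))
    (q : ℝ → ℝ)
    (hq : ∀ θ, q θ = f θbar + f' θbar * (θ - θbar) + w / 2 * (θ - θbar) ^ 2) :
    (∀ θ ∈ Set.Icc ((φ - π) / (2 * t)) ((φ + π) / (2 * t)), q θ ≥ f θ) ∧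
      q θbar = f θbar := by
  have ht2 : (0:ℝ) < 2 * t := by linarith
  set xb : ℝ := 2 * θbar * t - φ with hxb
  have hxbne : xb ≠ 0 := by
    intro h
    apply hne
    have : 2 * θbar * t = φ := by rw [hxb] at h; linarith
    field_simp
    linarith
  have hxb_lo : -π ≤ xb := by
    have := hmem.1
    rw [div_le_iff₀ ht2] at this
    rw [hxb]; nlinarith
  have hxb_hi : xb ≤ π := by
    have := hmem.2
    rw [le_div_iff₀ ht2] at this
    rw [hxb]; nlinarith
  -- rewrite w
  have hwd : θbar - φ / (2 * t) = xb / (2 * t) := by rw [hxb]; field_simp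
  have hw' : w = 4 * r * t ^ 2 * Real.sin xb / xb := by
    rw [hw, hf', hwd, ← hxb]
    field_simp
    ring
  constructor
  · intro θ hθ
    set x : ℝ := 2 * θ * t - φ with hx
    have hx_lo : -π ≤ x := by
      have := hθ.1
      rw [div_le_iff₀ ht2] at this
      rw [hx]; nlinarith
    have hx_hi : x ≤ π := by
      have := hθ.2
      rw [le_div_iff₀ ht2] at this
      rw [hx]; nlinarith
    -- key bracket inequality
    have hbr : Real.cos xb + Real.sin xb / (2 * xb) * xb ^ 2
        ≤ Real.cos x + Real.sin xb / (2 * xb) * x ^ 2 := by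
      rcases lt_or_gt_of_ne hxbne with hneg | hpos
      · have h := core_aux (-xb) (by linarith) (by linarith) (-x) (by linarith) (by linarith)
        have hd : Real.sin (-xb) / (2 * -xb) = Real.sin xb / (2 * xb) := by
          rw [Real.sin_neg, show (2:ℝ) * -xb = -(2 * xb) by ring, neg_div_neg_eq]
        rw [hd, Real.cos_neg, Real.cos_neg, neg_sq, neg_sq] at h
        exact h
      · exact core_aux xb hpos hxb_hi x hx_lo hx_hi
    -- now express q θ - f θ
    have hqf : q θ - f θ = r * ((Real.cos x + Real.sin xb / (2 * xb) * x ^ 2)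
        - (Real.cos xb + Real.sin xb / (2 * xb) * xb ^ 2)) := by
      rw [hq, hf θ, hf θbar, hf' θbar, hw', ← hxb, ← hx]
      have hθrel : θ - θbar = (x - xb) / (2 * t) := by rw [hx, hxb]; field_simp; ring
      rw [hθrel]
      field_simp
      ring
    have : 0 ≤ q θ - f θ := by
      rw [hqf]
      apply mul_nonneg hr
      linarith
    linarith
  · rw [hq]
    ring
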